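/- Let k ≥ 2 be an integer. Then the (2k−2)-fold iterated Maass raising operator applied to the function τ ↦ τ^{k−1} satisfies R_{2−2k}^{2k−2}(τ^{k−1}) = (2k−2)! · (conj(τ)/v²)^{k−1} for all τ = u+iv ∈ ℍ. -/

import Mathlib

noncomputable section

open Complex Real Finset

/-- The upper half-plane, as a subset of `ℂ`. -/
def UpperHalf : Set ℂ := {z : ℂ | 0 < z.im}

/-- The holomorphic Wirtinger derivative `∂f/∂τ = (1/2)(∂f/∂u − i ∂f/∂v)`. -/
def wirtinger (f : ℂ → ℂ) (τ : ℂ) : ℂ :=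
  (1 / 2) * (fderiv ℝ f τ 1 - Complex.I * fderiv ℝ f τ Complex.I)

/-- The antiholomorphic Wirtinger derivative `∂f/∂τ̄ = (1/2)(∂f/∂u + i ∂f/∂v)`. -/
def wirtingerBar (f : ℂ → ℂ) (τ : ℂ) : ℂ :=
  (1 / 2) * (fderiv ℝ f τ 1 + Complex.I * fderiv ℝ f τ Complex.I)

/-- The Maass raising operator `R_κ(f) = 2i ∂f/∂τ + (κ/v) f`. -/
def raise (κ : ℤ) (f : ℂ → ℂ) (τ : ℂ) : ℂ :=
  2 * Complex.I * wirtinger f τ + ((κ : ℂ) / (τ.im : ℂ)) * f τ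

/-- Iterated Maass raising operator `R_κ^n = R_{κ+2(n−1)} ∘ ⋯ ∘ R_κ`. -/
def raiseIter (κ : ℤ) : ℕ → (ℂ → ℂ) → (ℂ → ℂ)
  | 0, f => f
  | n + 1, f => raise (κ + 2 * (n : ℤ)) (raiseIter κ n f)

/-- The flipping operator `𝔉_{2−2k}(f)(τ) = −(v^{2k−2}/(2k−2)!) conj(R_{2−2k}^{2k−2}(f)(τ))`. -/
def flipOp (k : ℕ) (f : ℂ → ℂ) (τ : ℂ) : ℂ :=
  -(((τ.im : ℂ) ^ (2 * k - 2)) / ((2 * k - 2).factorial : ℂ)) *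
    (starRingEnd ℂ) (raiseIter (2 - 2 * (k : ℤ)) (2 * k - 2) f τ)

/-- The weight `−2k` flipping operator `𝔉_{−2k}(f)(τ) = −(v^{2k}/(2k)!) conj(R_{−2k}^{2k}(f)(τ))`. -/
def flipOpNeg (k : ℕ) (f : ℂ → ℂ) (τ : ℂ) : ℂ :=
  -(((τ.im : ℂ) ^ (2 * k)) / ((2 * k).factorial : ℂ)) *
    (starRingEnd ℂ) (raiseIter (-(2 * (k : ℤ))) (2 * k) f τ)

/-- The Bol-type operator `𝒟 = (1/(2πi)) ∂/∂τ`. -/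
def bol (f : ℂ → ℂ) : ℂ → ℂ := fun τ => (1 / (2 * (π : ℂ) * Complex.I)) * wirtinger f τ

/-- Iterates `𝒟^r` of the Bol-type operator. -/
def bolIter (r : ℕ) (f : ℂ → ℂ) : ℂ → ℂ := bol^[r] f

/-- The shadow operator `ξ_{2−2k}(f)(τ) = 2i v^{2−2k} conj(∂f/∂τ̄(τ))`. -/
def xiOp (k : ℕ) (f : ℂ → ℂ) (τ : ℂ) : ℂ :=
  2 * Complex.I * (τ.im : ℂ) ^ ((2 : ℤ) - 2 * k) * (starRingEnd ℂ) (wirtingerBar f τ)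

/-- Integral binary quadratic forms `[a,b,c]` of discriminant `D`. -/
def QD (D : ℤ) : Type := {q : ℤ × ℤ × ℤ // q.2.1 ^ 2 - 4 * q.1 * q.2.2 = D}

/-- `Q(z,1) = a z² + b z + c`. -/
def qval (q : ℤ × ℤ × ℤ) (z : ℂ) : ℂ :=
  (q.1 : ℂ) * z ^ 2 + (q.2.1 : ℂ) * z + (q.2.2 : ℂ)

/-- `Q_τ = (a(u²+v²) + bu + c)/v`. -/
def qtau (q : ℤ × ℤ × ℤ) (τ : ℂ) : ℝ :=
  ((q.1 : ℝ) * (τ.re ^ 2 + τ.im ^ 2) + (q.2.1 : ℝ) * τ.re + (q.2.2 : ℝ)) / τ.im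

/-- The exceptional set `E_D`, the union of the geodesics `Q_τ = 0`. -/
def ED (D : ℤ) : Set ℂ := {τ : ℂ | ∃ q : QD D, qtau q.1 τ = 0}

/-- The incomplete beta function `β(x;r,s) = ∫₀ˣ t^{r−1}(1−t)^{s−1} dt`. -/
def betaInt (x r s : ℝ) : ℝ := ∫ t in (0 : ℝ)..x, t ^ (r - 1) * (1 - t) ^ (s - 1)

/-- The locally harmonic Maass form `𝓕_{1−k,D}` of Bringmann–Kane–Kohnen. -/
def FBKK (k : ℕ) (D : ℕ) (τ : ℂ) : ℂ :=
  (((D : ℝ) ^ ((1 : ℝ) / 2 - (k : ℝ)) / (2 * ((2 * k - 2).choose (k - 1) : ℝ) * π) : ℝ) : ℂ) *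
    ∑' q : QD (D : ℤ),
      ((Real.sign (qtau q.1 τ) : ℝ) : ℂ) * qval q.1 τ ^ (k - 1) *
        ((betaInt ((D : ℝ) * τ.im ^ 2 / ‖qval q.1 τ‖ ^ 2)
            ((k : ℝ) - 1 / 2) (1 / 2) : ℝ) : ℂ)

/-- The function `𝒢_{−k,D}` of Bringmann–Mono. -/
def GBM (k : ℕ) (D : ℕ) (τ : ℂ) : ℂ :=
  (1 / 2 : ℂ) *
    ∑' q : QD (D : ℤ),
      qval q.1 τ ^ k *
        ((betaInt ((D : ℝ) * τ.im ^ 2 / ‖qval q.1 τ‖ ^ 2)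
            ((k : ℝ) + 1 / 2) (1 / 2) : ℝ) : ℂ)

/-- The rising factorial `(a)_n = a(a+1)⋯(a+n−1)`. -/
def risingFactorial (a : ℤ) (n : ℕ) : ℤ := ∏ i ∈ Finset.range n, (a + (i : ℤ))

/-!
Since `∂v/∂τ = -i/2`, the raising operator acts on a product of an antiholomorphic function `h`
with a power of `v` by `R_κ(h v^s) = (s + κ) h v^(s-1)`, so `R_κ^n(h v^s) = (s + κ)_n h v^(s-n)`
with the rising factorial `(s + κ)_n`. Writing `τ = τ̄ + 2iv` expands `τ^m` as
`∑ₐ binom(m, a) (2i)^a τ̄^(m-a) v^a`. For `κ = -2m` and `n = 2m` the factor `(a - 2m)_{2m}`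
vanishes unless `a = 0`, where it equals `(2m)!`.
-/

open ComplexConjugate

section Wirtinger

variable {f g : ℂ → ℂ} {τ : ℂ}

lemma wirtinger_congr (h : f =ᶠ[nhds τ] g) : wirtinger f τ = wirtinger g τ := by
  rw [wirtinger, wirtinger, h.fderiv_eq]

lemma wirtinger_mul (hf : DifferentiableAt ℝ f τ) (hg : DifferentiableAt ℝ g τ) :
    wirtinger (fun z => f z * g z) τ = wirtinger f τ * g τ + f τ * wirtinger g τ := by
  simp only [wirtinger, fderiv_fun_mul hf hg, add_apply, smul_apply, smul_eq_mul]
  ring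

lemma wirtinger_sum {ι : Type*} (s : Finset ι) {f : ι → ℂ → ℂ}
    (hf : ∀ i ∈ s, DifferentiableAt ℝ (f i) τ) :
    wirtinger (fun z => ∑ i ∈ s, f i z) τ = ∑ i ∈ s, wirtinger (f i) τ := by
  simp only [wirtinger, fderiv_fun_sum hf, _root_.sum_apply, Finset.mul_sum,
    ← Finset.sum_sub_distrib]

lemma wirtinger_conj_comp (hg : DifferentiableAt ℂ g τ) :
    wirtinger (fun z => conj (g z)) τ = 0 := by
  have : HasFDerivAt (fun z => conj (g z))
      (conjCLE.toContinuousLinearMap.comp ((fderiv ℂ g τ).restrictScalars ℝ)) τ :=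
    conjCLE.hasFDerivAt.comp τ (hg.hasFDerivAt.restrictScalars ℝ)
  rw [wirtinger, this.fderiv]
  simp only [ContinuousLinearMap.comp_apply, ContinuousLinearMap.coe_restrictScalars',
    fderiv_eq_smul_deriv, smul_eq_mul, ContinuousLinearEquiv.coe_coe, conjCLE_apply, map_mul,
    map_one, conj_I]
  linear_combination (1 / 2 * conj (deriv g τ)) * I_sq

lemma hasFDerivAt_im_zpow (s : ℤ) (hτ : τ.im ≠ 0) :
    HasFDerivAt (fun z : ℂ => (z.im : ℂ) ^ s)
      (((s : ℂ) * (τ.im : ℂ) ^ (s - 1)) • (ofRealCLM.comp imCLM)) τ :=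
  (hasDerivAt_zpow s _ (Or.inl (ofReal_ne_zero.mpr hτ))).comp_hasFDerivAt (h₂ := (· ^ s)) τ
    (ofRealCLM.comp imCLM).hasFDerivAt

lemma wirtinger_im_zpow (s : ℤ) (hτ : τ.im ≠ 0) :
    wirtinger (fun z : ℂ => (z.im : ℂ) ^ s) τ = -(I / 2) * s * (τ.im : ℂ) ^ (s - 1) := by
  rw [wirtinger, (hasFDerivAt_im_zpow s hτ).fderiv]
  simp only [smul_apply, ContinuousLinearMap.comp_apply, imCLM_apply, ofRealCLM_apply, one_im, I_im,
    ofReal_zero, ofReal_one, smul_eq_mul, mul_zero, mul_one]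
  ring

lemma wirtinger_const_mul (c : ℂ) (hf : DifferentiableAt ℝ f τ) :
    wirtinger (fun z => c * f z) τ = c * wirtinger f τ := by
  simp only [wirtinger, fderiv_const_mul hf, smul_apply, smul_eq_mul]
  ring

lemma differentiable_conj_pow (b : ℕ) : Differentiable ℝ fun z : ℂ => conj z ^ b :=
  conjCLE.differentiable.pow b

lemma wirtinger_conj_pow (b : ℕ) (τ : ℂ) : wirtinger (fun z : ℂ => conj z ^ b) τ = 0 := by
  simp only [← map_pow]
  exact wirtinger_conj_comp (differentiableAt_pow b)

end Wirtinger

section Raise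

variable {τ : ℂ}

lemma raise_congr {f g : ℂ → ℂ} (κ : ℤ) (h : f =ᶠ[nhds τ] g) : raise κ f τ = raise κ g τ := by
  rw [raise, raise, wirtinger_congr h, h.eq_of_nhds]

lemma raise_sum {ι : Type*} (κ : ℤ) (s : Finset ι) {f : ι → ℂ → ℂ}
    (hf : ∀ i ∈ s, DifferentiableAt ℝ (f i) τ) :
    raise κ (fun z => ∑ i ∈ s, f i z) τ = ∑ i ∈ s, raise κ (f i) τ := by
  simp only [raise, wirtinger_sum s hf, Finset.mul_sum, Finset.sum_add_distrib]

lemma raise_mul_im_zpow {h : ℂ → ℂ} (κ s : ℤ) (hτ : τ.im ≠ 0) (hd : DifferentiableAt ℝ h τ)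
    (hw : wirtinger h τ = 0) :
    raise κ (fun z => h z * (z.im : ℂ) ^ s) τ = (s + κ) * h τ * (τ.im : ℂ) ^ (s - 1) := by
  have hv : (τ.im : ℂ) ≠ 0 := ofReal_ne_zero.mpr hτ
  rw [raise, wirtinger_mul hd (hasFDerivAt_im_zpow s hτ).differentiableAt, hw,
    wirtinger_im_zpow s hτ, zpow_sub_one₀ hv]
  linear_combination (-(s : ℂ) * h τ * (τ.im : ℂ) ^ s * (τ.im : ℂ)⁻¹) * I_sq

end Raise

section RisingFactorial

lemma risingFactorial_zero (a : ℤ) : risingFactorial a 0 = 1 := rfl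

lemma risingFactorial_succ (a : ℤ) (n : ℕ) :
    risingFactorial a (n + 1) = risingFactorial a n * (a + n) :=
  Finset.prod_range_succ _ n

lemma risingFactorial_eq_zero {a : ℤ} {n : ℕ} (ha : a ≤ 0) (han : -(n : ℤ) < a) :
    risingFactorial a n = 0 :=
  Finset.prod_eq_zero (i := (-a).toNat) (Finset.mem_range.mpr (by omega)) (by omega)

lemma risingFactorial_neg_self (n : ℕ) : risingFactorial (-n) n = (-1) ^ n * n.factorial := by
  rw [risingFactorial, ← Finset.prod_range_add_one_eq_factorial, Nat.cast_prod,
    ← Finset.prod_range_reflect, Finset.pow_eq_prod_const, ← Finset.prod_mul_distrib]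
  refine Finset.prod_congr rfl fun i hi => ?_
  have := Finset.mem_range.mp hi
  push_cast
  omega

end RisingFactorial

theorem raiseIter_sum_mul_im_zpow {ι : Type*} (κ : ℤ) (S : Finset ι) {h : ι → ℂ → ℂ} (e : ι → ℤ)
    (hd : ∀ i ∈ S, ∀ z : ℂ, 0 < z.im → DifferentiableAt ℝ (h i) z)
    (hw : ∀ i ∈ S, ∀ z : ℂ, 0 < z.im → wirtinger (h i) z = 0) (n : ℕ) {τ : ℂ} (hτ : 0 < τ.im) :
    raiseIter κ n (fun z => ∑ i ∈ S, h i z * (z.im : ℂ) ^ e i) τ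
      = ∑ i ∈ S, risingFactorial (e i + κ) n * h i τ * (τ.im : ℂ) ^ (e i - n) := by
  induction n generalizing τ with
  | zero => simp [raiseIter, risingFactorial_zero]
  | succ n ih =>
    have hU : {z : ℂ | 0 < z.im} ∈ nhds τ :=
      (isOpen_lt continuous_const continuous_im).mem_nhds hτ
    have hloc := Filter.eventuallyEq_of_mem hU fun z hz => ih hz
    rw [raiseIter, raise_congr _ hloc]
    have hv : τ.im ≠ 0 := hτ.ne'
    have hterm : ∀ i ∈ S,
        DifferentiableAt ℝ (fun z => (risingFactorial (e i + κ) n : ℂ) * h i z) τ :=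
      fun i hi => (hd i hi τ hτ).const_mul _
    rw [raise_sum _ _ fun i hi => (hterm i hi).fun_mul (hasFDerivAt_im_zpow _ hv).differentiableAt]
    refine Finset.sum_congr rfl fun i hi => ?_
    rw [raise_mul_im_zpow _ _ hv (hterm i hi)
        (by rw [wirtinger_const_mul _ (hd i hi τ hτ), hw i hi τ hτ, mul_zero]),
      risingFactorial_succ, sub_sub]
    push_cast
    ring

lemma pow_eq_sum_conj_pow_mul_im_zpow (m : ℕ) (z : ℂ) :
    z ^ m = ∑ a ∈ Finset.range (m + 1),
      (2 * I) ^ a * m.choose a * conj z ^ (m - a) * (z.im : ℂ) ^ (a : ℤ) := by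
  have hz : z = 2 * I * z.im + conj z := by
    rw [← sub_eq_iff_eq_add, sub_conj]
    push_cast
    ring
  conv_lhs => rw [hz, add_pow]
  refine Finset.sum_congr rfl fun a _ => ?_
  rw [zpow_natCast]
  ring

theorem raiseIter_neg_two_mul_pow (m : ℕ) {τ : ℂ} (hτ : 0 < τ.im) :
    raiseIter (-(2 * m : ℤ)) (2 * m) (fun z => z ^ m) τ
      = (2 * m).factorial * (conj τ / (τ.im : ℂ) ^ 2) ^ m := by
  rw [funext (pow_eq_sum_conj_pow_mul_im_zpow m), raiseIter_sum_mul_im_zpow _ _ _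
    (fun a _ z _ => ((differentiable_conj_pow _).const_mul _).differentiableAt)
    (fun a _ z _ => by
      rw [wirtinger_const_mul _ ((differentiable_conj_pow _).differentiableAt), wirtinger_conj_pow,
        mul_zero]) _ hτ,
    Finset.sum_eq_single_of_mem 0 (by simp)]
  · rw [Nat.cast_zero, zero_add, ← Nat.cast_ofNat, ← Nat.cast_mul, risingFactorial_neg_self,
      (even_two_mul m).neg_one_pow, zero_sub, zpow_neg, zpow_natCast, div_pow, pow_mul]
    simp only [one_mul, Int.cast_natCast, pow_zero, Nat.choose_zero_right, Nat.cast_one, mul_one,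
      tsub_zero]
    field_simp
  · intro a ha ha0
    have := Finset.mem_range.mp ha
    rw [risingFactorial_eq_zero (by omega) (by omega), Int.cast_zero, zero_mul, zero_mul]

theorem raiseIter_pow_general (k : ℕ) (τ : ℂ) (hτ : 0 < τ.im) :
    raiseIter (2 - 2 * (k : ℤ)) (2 * k - 2) (fun z => z ^ (k - 1)) τ
      = ((2 * k - 2).factorial : ℂ) * ((starRingEnd ℂ) τ / (τ.im : ℂ) ^ 2) ^ (k - 1) := by
  obtain _ | m := k
  · simp [raiseIter]
  · have hκ : 2 - 2 * ((m + 1 : ℕ) : ℤ) = -(2 * m : ℤ) := by push_cast; ring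
    rw [hκ, show 2 * (m + 1) - 2 = 2 * m by omega, Nat.add_sub_cancel]
    exact raiseIter_neg_two_mul_pow m hτ

/-- `R_{2−2k}^{2k−2}(τ^{k−1}) = (2k−2)! (τ̄/v²)^{k−1}` on `ℍ`. -/
theorem raiseIter_pow (k : ℕ) (hk : 2 ≤ k) (τ : ℂ) (hτ : 0 < τ.im) :
    raiseIter (2 - 2 * (k : ℤ)) (2 * k - 2) (fun z => z ^ (k - 1)) τ
      = ((2 * k - 2).factorial : ℂ) * ((starRingEnd ℂ) τ / (τ.im : ℂ) ^ 2) ^ (k - 1) :=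
  raiseIter_pow_general k τ hτ

end
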